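/- arXiv:1404.5218 — 3 statements merged into one kernel-verified Lean document; each statement's English description precedes it below -/
import Mathlib

section
/- Let $\pi$ be a probability density on $S \subseteq \mathbb{R}^K$ proportional to $g q$, where $q$ is a probability density positive on $S$ and the weight function $g = h/q$ satisfies $a^{-1} \le g \le a$ on $S$ for some $0 < a < \infty$. Let $\theta^{(1)}, \ldots, \theta^{(M)}$ be i.i.d. samples from $q$, let $g^J$ (for $J = J(M) \ge M$) be random approximations of $g$ satisfying $a^{-1} \le g^J \le a$ and $\sup_{\theta \in S}|g(\theta) - g^J(\theta)| \le W_{g,\epsilon} / J^{1/2-\epsilon}$ for an a.s. finite random variable $W_{g,\epsilon}$ and constant $0 < \epsilon < 1/2$. Define the self-normalized importance sampling estimator $(f, \pi^{M,J}) = \sum_{i=1}^M f(\theta^{(i)}) w^{(i),J}$ with $w^{(i),J} = g^J(\theta^{(i)}) / \sum_{j=1}^M g^J(\theta^{(j)})$. Then for every bounded $f: S \to \mathbb{R}$ there exists an a.s. finite random variable $W_{f,g,\epsilon}$, independent of $M$ and $J$, such that $|(f, \pi^{M,J}) - (f, \pi)| \le W_{f,g,\epsilon} / M^{1/2 - \epsilon}$;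 in particular $(f, \pi^{M,J}) \to (f, \pi)$ almost surely as $M \to \infty$. -/
/-!
By Hoeffding's inequality, the centred sum of `M` i.i.d. bounded variables exceeds
`M ^ (1/2 + ε)` with probability at most `exp (-b M ^ (2ε))`, which is summable, so by
Borel–Cantelli the sample means of `f g` and `g` are almost surely eventually within
`M ^ -(1/2 - ε)` of `∫ f g dq` and `∫ g dq`. Since `J M ≥ M`, replacing `g` by `g^J` moves
both sample means by at most `W / M ^ (1/2 - ε)`, and the ratio of the two means is Lipschitz
there because the denominators are at least `a⁻¹`. This gives the rate for all large `M`;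
the finitely many remaining `M` are absorbed by taking `W_f` to be the supremum of
`M ^ (1/2 - ε) * |(f, π^{M,J}) - (f, π)|`.
-/

open MeasureTheory ProbabilityTheory Filter Real Finset

open scoped NNReal ENNReal

lemma ProbabilityTheory.HasSubgaussianMGF.mono {Ω : Type*} {mΩ : MeasurableSpace Ω}
    {μ : Measure Ω} {X : Ω → ℝ} {c d : ℝ≥0} (h : HasSubgaussianMGF X c μ) (hcd : c ≤ d) :
    HasSubgaussianMGF X d μ :=
  ⟨h.integrable_exp_mul, fun t => (h.mgf_le t).trans <| exp_le_exp.2 <| by gcongr⟩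

lemma summable_exp_neg_mul_rpow {b δ : ℝ} (hb : 0 < b) (hδ : 0 < δ) :
    Summable fun n : ℕ => exp (-b * (n : ℝ) ^ δ) := by
  have hO : (fun x : ℝ => exp (-b * x ^ δ)) =o[atTop] fun x => (x ^ δ) ^ (-2 / δ) :=
    (isLittleO_exp_neg_mul_rpow_atTop hb _).comp_tendsto (tendsto_rpow_atTop hδ)
  have hpow : (fun x : ℝ => (x ^ δ) ^ (-2 / δ)) =ᶠ[atTop] fun x => x ^ (-2 : ℝ) := by
    filter_upwards [eventually_ge_atTop 0] with x hx
    rw [← rpow_mul hx, mul_div_cancel₀ _ hδ.ne']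
  refine summable_of_isBigO_nat (Real.summable_nat_rpow.2 (by norm_num : (-2 : ℝ) < -1)) ?_
  exact ((hO.trans_eventuallyEq hpow).comp_tendsto tendsto_natCast_atTop_atTop).isBigO

lemma ae_eventually_sum_range_lt_rpow {Ω : Type*} {mΩ : MeasurableSpace Ω}
    {μ : Measure Ω} [IsFiniteMeasure μ] {X : ℕ → Ω → ℝ} {c : ℝ≥0} (hX : iIndepFun X μ)
    (hsub : ∀ i, HasSubgaussianMGF (X i) c μ) {ε : ℝ} (hε : 0 < ε) :
    ∀ᵐ ω ∂μ, ∀ᶠ n : ℕ in atTop, ∑ i ∈ range n, X i ω < (n : ℝ) ^ ((1 : ℝ) / 2 + ε) := by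
  -- Hoeffding's bound is vacuous for `c = 0`, hence the parameter `c + 1`.
  have htail : ∀ n : ℕ, μ.real {ω | (n : ℝ) ^ ((1 : ℝ) / 2 + ε) ≤ ∑ i ∈ range n, X i ω}
      ≤ exp (-(2 * ((c + 1 : ℝ≥0) : ℝ))⁻¹ * (n : ℝ) ^ (2 * ε)) := by
    intro n
    refine (HasSubgaussianMGF.measure_sum_range_ge_le_of_iIndepFun hX
      (fun i _ => (hsub i).mono (le_self_add : c ≤ c + 1)) (by positivity)).trans (exp_le_exp.2 ?_)
    rcases n.eq_zero_or_pos with rfl | hn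
    · simp [zero_rpow (by positivity : 2 * ε ≠ 0)]
    · have hn' : (0 : ℝ) < n := by exact_mod_cast hn
      rw [← rpow_natCast, ← rpow_mul hn'.le, show (1 / 2 + ε) * ((2 : ℕ) : ℝ) = 1 + 2 * ε by
        push_cast; ring, rpow_add hn', rpow_one]
      exact le_of_eq (by field_simp)
  have hsum : (∑' n : ℕ, μ {ω | (n : ℝ) ^ ((1 : ℝ) / 2 + ε) ≤ ∑ i ∈ range n, X i ω}) ≠ ∞ := by
    refine ne_top_of_le_ne_top ?_ (ENNReal.tsum_le_tsum fun n =>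
      (ofReal_measureReal (measure_ne_top μ _)).symm.trans_le (ENNReal.ofReal_le_ofReal (htail n)))
    rw [← ENNReal.ofReal_tsum_of_nonneg (fun n => (exp_pos _).le)
      (summable_exp_neg_mul_rpow (by positivity) (by positivity))]
    exact ENNReal.ofReal_ne_top
  filter_upwards [ae_eventually_notMem hsum] with ω hω
  filter_upwards [hω] with n hn
  exact not_le.1 hn

lemma ae_eventually_abs_sum_range_le_rpow {Ω : Type*} {mΩ : MeasurableSpace Ω}
    {μ : Measure Ω} [IsFiniteMeasure μ] {X : ℕ → Ω → ℝ} {c : ℝ≥0} (hX : iIndepFun X μ)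
    (hsub : ∀ i, HasSubgaussianMGF (X i) c μ) {ε : ℝ} (hε : 0 < ε) :
    ∀ᵐ ω ∂μ, ∀ᶠ n : ℕ in atTop, |∑ i ∈ range n, X i ω| ≤ (n : ℝ) ^ ((1 : ℝ) / 2 + ε) := by
  have hneg := ae_eventually_sum_range_lt_rpow (hX.comp (fun _ x => -x) fun _ => measurable_neg)
    (fun i => (hsub i).neg) hε
  filter_upwards [ae_eventually_sum_range_lt_rpow hX hsub hε, hneg] with ω hpos hneg
  filter_upwards [hpos, hneg] with n hpos hneg
  simp only [Function.comp_apply, sum_neg_distrib] at hneg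
  exact abs_le.2 ⟨by linarith, hpos.le⟩

lemma ae_eventually_abs_sampleMean_sub_integral_le {α Ω : Type*} [MeasurableSpace α]
    {mΩ : MeasurableSpace Ω} {μ : Measure Ω} [IsProbabilityMeasure μ] {q : Measure α}
    {θ : ℕ → Ω → α} (hθ : ∀ i, Measurable (θ i)) (hind : iIndepFun θ μ)
    (hlaw : ∀ i, μ.map (θ i) = q) {φ : α → ℝ} (hφ : Measurable φ) {C : ℝ}
    (hC : ∀ x, |φ x| ≤ C) {ε : ℝ} (hε : 0 < ε) :
    ∀ᵐ ω ∂μ, ∀ᶠ n : ℕ in atTop,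
      |(∑ i ∈ range n, φ (θ i ω)) / n - ∫ x, φ x ∂q| ≤ 1 / (n : ℝ) ^ ((1 : ℝ) / 2 - ε) := by
  have hmean : ∀ i, ∫ ω, φ (θ i ω) ∂μ = ∫ x, φ x ∂q := fun i => by
    rw [← hlaw i, integral_map (hθ i).aemeasurable hφ.aestronglyMeasurable]
  set m := ∫ x, φ x ∂q
  have hsub : ∀ i, HasSubgaussianMGF (fun ω => φ (θ i ω) - m) ((‖C - -C‖₊ / 2) ^ 2) μ := by
    intro i
    have := hasSubgaussianMGF_of_mem_Icc (hφ.comp (hθ i)).aemeasurable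
      (ae_of_all μ fun ω => abs_le.1 (hC (θ i ω)))
    simpa only [Function.comp_apply, hmean] using this
  have hind' : iIndepFun (fun i ω => φ (θ i ω) - m) μ :=
    hind.comp (fun _ x => φ x - m) fun _ => hφ.sub_const m
  filter_upwards [ae_eventually_abs_sum_range_le_rpow hind' hsub hε] with ω hω
  filter_upwards [hω, eventually_gt_atTop 0] with n hn hpos
  have hn' : (0 : ℝ) < n := by exact_mod_cast hpos
  rw [sum_sub_distrib, sum_const, card_range, nsmul_eq_mul] at hn
  calc |(∑ i ∈ range n, φ (θ i ω)) / n - m| = |∑ i ∈ range n, φ (θ i ω) - n * m| / n := by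
        rw [← abs_of_pos hn', ← abs_div, abs_of_pos hn', sub_div, mul_div_cancel_left₀ _ hn'.ne']
    _ ≤ (n : ℝ) ^ ((1 : ℝ) / 2 + ε) / n := by gcongr
    _ = 1 / (n : ℝ) ^ ((1 : ℝ) / 2 - ε) := by
        rw [div_eq_div_iff hn'.ne' (rpow_pos_of_pos hn' _).ne', one_mul, ← rpow_add hn',
          add_add_sub_cancel, add_halves, rpow_one]

lemma abs_div_sub_div_le {x y A B P R F c : ℝ} (hc : 0 < c) (hy : c ≤ y) (hB : B ≠ 0)
    (hAB : |A / B| ≤ F) (hx : |x - A| ≤ P) (hyB : |y - B| ≤ R) :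
    |x / y - A / B| ≤ (P + F * R) / c := by
  have hy0 : 0 < y := hc.trans_le hy
  have hF : 0 ≤ F := (abs_nonneg _).trans hAB
  have hnum : |(x - A) - A / B * (y - B)| ≤ P + F * R :=
    calc _ ≤ |x - A| + |A / B| * |y - B| := by rw [← abs_mul]; exact abs_sub _ _
      _ ≤ P + F * R := by gcongr
  have hdecomp : x / y - A / B = ((x - A) - A / B * (y - B)) / y := by field_simp; ring
  rw [hdecomp, abs_div, abs_of_pos hy0]
  calc _ ≤ (P + F * R) / y := by gcongr
    _ ≤ (P + F * R) / c := by gcongr; exact (abs_nonneg _).trans hnum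

lemma abs_sum_div_card_sub_sum_div_card_le {ι : Type*} (s : Finset ι) {x y : ι → ℝ} {δ : ℝ}
    (hδ : 0 ≤ δ) (h : ∀ i ∈ s, |x i - y i| ≤ δ) :
    |(∑ i ∈ s, x i) / #s - (∑ i ∈ s, y i) / #s| ≤ δ := by
  rw [← sub_div, ← sum_sub_distrib, abs_div, Nat.abs_cast]
  rcases s.eq_empty_or_nonempty with rfl | hs
  · simpa using hδ
  rw [div_le_iff₀ (by exact_mod_cast hs.card_pos), mul_comm, ← nsmul_eq_mul]
  exact (abs_sum_le_sum_abs _ _).trans (sum_le_card_nsmul _ _ _ h)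

noncomputable def selfNormalizedEstimate {α : Type*} (f w : α → ℝ) (x : ℕ → α) (n : ℕ) : ℝ :=
  (∑ i ∈ range n, f (x i) * w (x i)) / ∑ i ∈ range n, w (x i)

lemma abs_selfNormalizedEstimate_sub_le {α : Type*} {f w w' : α → ℝ} {x : ℕ → α} {n : ℕ}
    (hn : 0 < n) {F c δ η A B : ℝ} (hc : 0 < c) (hw' : ∀ y, c ≤ w' y) (hf : ∀ y, |f y| ≤ F)
    (hδ : ∀ y, |w' y - w y| ≤ δ) (hB : B ≠ 0) (hAB : |A / B| ≤ F)
    (hfw : |(∑ i ∈ range n, f (x i) * w (x i)) / n - A| ≤ η)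
    (hw : |(∑ i ∈ range n, w (x i)) / n - B| ≤ η) :
    |selfNormalizedEstimate f w' x n - A / B| ≤ (F * δ + η + F * (δ + η)) / c := by
  have hn' : (0 : ℝ) < n := by exact_mod_cast hn
  have hF : 0 ≤ F := (abs_nonneg _).trans hAB
  have hδ0 : 0 ≤ δ := (abs_nonneg _).trans (hδ (x 0))
  have hnum : |(∑ i ∈ range n, f (x i) * w' (x i)) / n - A| ≤ F * δ + η := by
    refine (abs_sub_le _ ((∑ i ∈ range n, f (x i) * w (x i)) / n) _).trans (add_le_add ?_ hfw)
    simpa using abs_sum_div_card_sub_sum_div_card_le (range n) (by positivity) fun i _ => by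
      rw [← mul_sub, abs_mul]; exact mul_le_mul (hf _) (hδ _) (abs_nonneg _) hF
  have hden : |(∑ i ∈ range n, w' (x i)) / n - B| ≤ δ + η := by
    refine (abs_sub_le _ ((∑ i ∈ range n, w (x i)) / n) _).trans (add_le_add ?_ hw)
    simpa using abs_sum_div_card_sub_sum_div_card_le (range n) hδ0 fun i _ => hδ (x i)
  have hlow : c ≤ (∑ i ∈ range n, w' (x i)) / n := by
    rw [le_div_iff₀ hn', mul_comm, ← nsmul_eq_mul]
    simpa using card_nsmul_le_sum (range n) _ c fun i _ => hw' (x i)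
  rw [selfNormalizedEstimate, ← div_div_div_cancel_right₀ hn'.ne']
  exact abs_div_sub_div_le hc hlow hB hAB hnum hden

lemma le_iSup_rpow_mul_div_rpow {v : ℕ → ℝ} {p K : ℝ}
    (h : ∀ᶠ n : ℕ in atTop, v n ≤ K / (n : ℝ) ^ p) {n : ℕ} (hn : 0 < n) :
    v n ≤ (⨆ m : ℕ, (m : ℝ) ^ p * v m) / (n : ℝ) ^ p := by
  have hbdd : BddAbove (Set.range fun m : ℕ => (m : ℝ) ^ p * v m) := by
    refine (isBoundedUnder_of_eventually_le (a := K) ?_).bddAbove_range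
    filter_upwards [h, eventually_gt_atTop 0] with m hm hpos
    rwa [← le_div_iff₀' (rpow_pos_of_pos (Nat.cast_pos.2 hpos) p)]
  rw [le_div_iff₀' (rpow_pos_of_pos (Nat.cast_pos.2 hn) p)]
  exact le_ciSup hbdd n

lemma tendsto_of_eventually_abs_sub_le_div_rpow {u : ℕ → ℝ} {L p K : ℝ} (hp : 0 < p)
    (h : ∀ᶠ n : ℕ in atTop, |u n - L| ≤ K / (n : ℝ) ^ p) : Tendsto u atTop (nhds L) := by
  refine tendsto_iff_norm_sub_tendsto_zero.2 (squeeze_zero' (Eventually.of_forall fun n =>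
    norm_nonneg _) h ?_)
  exact tendsto_const_nhds.div_atTop ((tendsto_rpow_atTop hp).comp tendsto_natCast_atTop_atTop)

lemma abs_integral_mul_div_integral_le {α : Type*} [MeasurableSpace α] {q : Measure α}
    {f g : α → ℝ} {F : ℝ} (hgint : Integrable g q) (hg : ∀ x, 0 ≤ g x) (hB : 0 < ∫ x, g x ∂q)
    (hf : ∀ x, |f x| ≤ F) :
    |(∫ x, f x * g x ∂q) / ∫ x, g x ∂q| ≤ F := by
  rw [abs_div, abs_of_pos hB, div_le_iff₀ hB]
  calc |∫ x, f x * g x ∂q| ≤ ∫ x, F * g x ∂q :=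
        norm_integral_le_of_norm_le (f := fun x => f x * g x) (hgint.const_mul F)
          (ae_of_all _ fun x => by
            rw [norm_mul, Real.norm_eq_abs, Real.norm_eq_abs, abs_of_nonneg (hg x)]
            exact mul_le_mul_of_nonneg_right (hf x) (hg x))
    _ = F * ∫ x, g x ∂q := integral_const_mul F g

lemma ae_eventually_abs_selfNormalizedEstimate_sub_le {α Ω : Type*} [MeasurableSpace α]
    [MeasurableSpace Ω] {μ : Measure Ω} [IsProbabilityMeasure μ] {q : Measure α}
    [IsProbabilityMeasure q] {a : ℝ} (ha : 0 < a) {g : α → ℝ} (hgmeas : Measurable g)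
    (hg : ∀ x, a⁻¹ ≤ g x ∧ g x ≤ a) {θ : ℕ → Ω → α} (hθmeas : ∀ i, Measurable (θ i))
    (hiid : iIndepFun θ μ) (hlaw : ∀ i, μ.map (θ i) = q) {J : ℕ → ℕ} (hJ : ∀ M, M ≤ J M)
    {gJ : ℕ → Ω → α → ℝ} (hgJ : ∀ J' ω x, a⁻¹ ≤ gJ J' ω x) {ε : ℝ} (hε1 : 0 < ε)
    (hε2 : ε ≤ 1 / 2) {W : Ω → ℝ} (hW : ∀ ω, 0 ≤ W ω)
    (happrox : ∀ᵐ ω ∂μ, ∀ J' : ℕ, 1 ≤ J' → ∀ x,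
      |g x - gJ J' ω x| ≤ W ω / (J' : ℝ) ^ ((1 : ℝ) / 2 - ε))
    {f : α → ℝ} (hfmeas : Measurable f) {F : ℝ} (hf : ∀ x, |f x| ≤ F) :
    ∀ᵐ ω ∂μ, ∀ᶠ M : ℕ in atTop,
      |selfNormalizedEstimate f (gJ (J M) ω) (fun i => θ i ω) M -
        (∫ x, f x * g x ∂q) / ∫ x, g x ∂q|
        ≤ a * (F * W ω + 1 + F * (W ω + 1)) / (M : ℝ) ^ ((1 : ℝ) / 2 - ε) := by
  have hgpos : ∀ x, 0 < g x := fun x => (inv_pos.2 ha).trans_le (hg x).1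
  have hgabs : ∀ x, |g x| ≤ a := fun x => by rw [abs_of_pos (hgpos x)]; exact (hg x).2
  have hgint : Integrable g q := .of_bound hgmeas.aestronglyMeasurable a (ae_of_all _ hgabs)
  have hB : 0 < ∫ x, g x ∂q := (inv_pos.2 ha).trans_le <| by
    simpa using integral_mono (integrable_const a⁻¹) hgint fun x => (hg x).1
  have hfg : ∀ x, |f x * g x| ≤ F * a := fun x => by
    rw [abs_mul]; exact mul_le_mul (hf x) (hgabs x) (abs_nonneg _) ((abs_nonneg _).trans (hf x))
  filter_upwards [ae_eventually_abs_sampleMean_sub_integral_le hθmeas hiid hlaw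
    (hfmeas.mul hgmeas) hfg hε1, ae_eventually_abs_sampleMean_sub_integral_le hθmeas hiid hlaw
    hgmeas hgabs hε1, happrox] with ω hfgMean hgMean happrox
  filter_upwards [hfgMean, hgMean, eventually_gt_atTop 0] with M hfgM hgM hM
  have hclose : ∀ y, |gJ (J M) ω y - g y| ≤ W ω / (M : ℝ) ^ ((1 : ℝ) / 2 - ε) := fun y => by
    rw [abs_sub_comm]
    refine (happrox (J M) (hM.trans_le (hJ M)) y).trans ?_
    gcongr
    · exact hW ω
    · exact_mod_cast hJ M
  refine (abs_selfNormalizedEstimate_sub_le hM (inv_pos.2 ha) (hgJ (J M) ω) hf hclose hB.ne'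
    (abs_integral_mul_div_integral_le hgint (fun x => (hgpos x).le) hB hf) hfgM hgM).trans_eq ?_
  field_simp

/-- self-normalized importance sampling with approximate weights
`g^J` (computed e.g. by a particle filter, `J = J(M) ≥ M`) retains the Monte
Carlo rate: `|(f, π^{M,J}) - (f,π)| ≤ W_{f,g,ε} / M^(1/2-ε)` a.s., where
`(f,π) = (fg,q)/(g,q)`; in particular a.s. convergence holds. -/
theorem stmt4 {α Ω : Type} [MeasurableSpace α] [MeasurableSpace Ω]
    (μ : Measure Ω) [IsProbabilityMeasure μ]
    (q : Measure α) [IsProbabilityMeasure q]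
    (a : ℝ) (ha : 0 < a)
    (g : α → ℝ) (hgmeas : Measurable g)
    (hg : ∀ x, a⁻¹ ≤ g x ∧ g x ≤ a)
    (θ : ℕ → Ω → α) (hθmeas : ∀ i, Measurable (θ i))
    (hiid : iIndepFun θ μ)
    (hlaw : ∀ i, μ.map (θ i) = q)
    (J : ℕ → ℕ) (hJ : ∀ M, M ≤ J M)
    (gJ : ℕ → Ω → α → ℝ)
    (hgJbnd : ∀ J' ω x, a⁻¹ ≤ gJ J' ω x ∧ gJ J' ω x ≤ a)
    (ε : ℝ) (hε1 : 0 < ε) (hε2 : ε < 1 / 2)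
    (W : Ω → ℝ) (hW : ∀ ω, 0 ≤ W ω)
    (happrox : ∀ᵐ ω ∂μ, ∀ J' : ℕ, 1 ≤ J' → ∀ x,
      |g x - gJ J' ω x| ≤ W ω / (J' : ℝ) ^ ((1 : ℝ) / 2 - ε))
    (f : α → ℝ) (hfmeas : Measurable f) (F : ℝ) (hf : ∀ x, |f x| ≤ F) :
    ∃ Wf : Ω → ℝ, (∀ ω, 0 ≤ Wf ω) ∧
      (∀ᵐ ω ∂μ, ∀ M : ℕ, 1 ≤ M →
        |(∑ i ∈ Finset.range M, f (θ i ω) * gJ (J M) ω (θ i ω)) /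
            (∑ i ∈ Finset.range M, gJ (J M) ω (θ i ω)) -
          (∫ x, f x * g x ∂q) / (∫ x, g x ∂q)|
          ≤ Wf ω / (M : ℝ) ^ ((1 : ℝ) / 2 - ε)) ∧
      (∀ᵐ ω ∂μ, Tendsto (fun M : ℕ =>
          (∑ i ∈ Finset.range M, f (θ i ω) * gJ (J M) ω (θ i ω)) /
            (∑ i ∈ Finset.range M, gJ (J M) ω (θ i ω)))
        atTop (nhds ((∫ x, f x * g x ∂q) / (∫ x, g x ∂q)))) := by
  have hrate := ae_eventually_abs_selfNormalizedEstimate_sub_le ha hgmeas hg hθmeas hiid hlaw hJ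
    (fun J' ω x => (hgJbnd J' ω x).1) hε1 hε2.le hW happrox hfmeas hf
  refine ⟨fun ω => ⨆ M : ℕ, (M : ℝ) ^ ((1 : ℝ) / 2 - ε) *
      |selfNormalizedEstimate f (gJ (J M) ω) (fun i => θ i ω) M -
        (∫ x, f x * g x ∂q) / ∫ x, g x ∂q|,
    fun ω => Real.iSup_nonneg fun M => by positivity, ?_, ?_⟩
  · filter_upwards [hrate] with ω h M hM using le_iSup_rpow_mul_div_rpow h hM
  · filter_upwards [hrate] with ω h
    exact tendsto_of_eventually_abs_sub_le_div_rpow (by linarith) h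
end

section
/- Let $\pi^{M,J}$ and $\bar{\pi}^{M,J}$ be the normalized importance sampling measures built on the same samples $\theta^{(1)}, \ldots, \theta^{(M)}$ from the approximate weights $g^J(\theta^{(i)})$ and their clipped versions $\varphi^M(g^J(\theta^{(i)}))$ respectively, where $a^{-1} \le g^J \le a$ and the clipping replaces the $M_T$ largest weights by the $M_T$-th largest. Then for every bounded $f$, the deterministic bound $|(f, \bar{\pi}^{M,J}) - (f, \pi^{M,J})| \le 2 a^2 \|f\|_\infty M_T / M$ holds. -/
/-- The `k`-th largest value (1-based) among `v 0, …, v (M-1)`. -/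
noncomputable def kthLargest {M : ℕ} (v : Fin M → ℝ) (k : ℕ) : ℝ :=
  (List.insertionSort (fun x y : ℝ => x ≥ y) (List.ofFn v)).getD (k - 1) 0

/-!
Write `w i = v i` and `w̄ i = min (v i) c` with `c` the `M_T`-th largest weight. Since
`A/B - A'/B' = (A - A')/B + (A'/B') (B' - B)/B` and `|A'/B'| ≤ ‖f‖∞`, the discrepancy of the
self-normalized means is at most `2 ‖f‖∞ ∑ |w̄ i - w i| / ∑ w̄ i`. Clipping only changes the fewer
than `M_T` weights lying strictly above `c`, each by at most `a`, and every clipped weight is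
still at least `a⁻¹`, so this is at most `2 ‖f‖∞ (M_T a) / (M a⁻¹)`.
-/

open Finset

theorem List.Pairwise.countP_lt_getElem_le {α : Type*} [LinearOrder α] {l : List α}
    (hl : l.Pairwise (· ≥ ·)) {n : ℕ} (hn : n < l.length) : l.countP (l[n] < ·) ≤ n := by
  have hdrop : (l.drop n).countP (l[n] < ·) = 0 := by
    rw [List.countP_eq_zero]
    intro x hx
    obtain ⟨m, hm, rfl⟩ := List.mem_iff_getElem.mp hx
    simp only [List.getElem_drop, decide_eq_true_eq, not_lt]
    exact hl.rel_get_of_le (a := ⟨n, hn⟩) (b := ⟨n + m, by simp at hm; omega⟩)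
      (by simp [Fin.le_def])
  calc l.countP (l[n] < ·) = (l.take n ++ l.drop n).countP (l[n] < ·) := by
        rw [List.take_append_drop]
    _ = (l.take n).countP (l[n] < ·) := by rw [List.countP_append, hdrop, add_zero]
    _ ≤ (l.take n).length := List.countP_le_length
    _ ≤ n := List.length_take_le n l

theorem Fin.card_filter_univ_eq_countP_ofFn {α : Type*} {M : ℕ} (v : Fin M → α) (p : α → Prop)
    [DecidablePred p] : #{i | p (v i)} = (List.ofFn v).countP (p ·) := by
  rw [← Multiset.coe_countP, ← Fin.univ_val_map, Multiset.countP_map]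
  rfl

section kthLargest

variable {M k : ℕ} (v : Fin M → ℝ)

theorem kthLargest_eq_getElem (hk : k - 1 < M) :
    kthLargest v k =
      (List.insertionSort (fun x y : ℝ => x ≥ y) (List.ofFn v))[k - 1]'(by simpa using hk) :=
  List.getD_eq_getElem _ _ _

theorem kthLargest_mem_range (hk : k - 1 < M) : kthLargest v k ∈ Set.range v := by
  rw [kthLargest_eq_getElem v hk]
  exact List.mem_ofFn.mp ((List.perm_insertionSort _ _).subset (List.getElem_mem _))

theorem card_lt_kthLargest_le (hk : k - 1 < M) : #{i | kthLargest v k < v i} ≤ k - 1 := by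
  have hsorted := List.pairwise_insertionSort (fun x y : ℝ => x ≥ y) (List.ofFn v)
  rw [Fin.card_filter_univ_eq_countP_ofFn,
    ← (List.perm_insertionSort (fun x y : ℝ => x ≥ y) (List.ofFn v)).countP_eq,
    kthLargest_eq_getElem v hk]
  exact hsorted.countP_lt_getElem_le _

end kthLargest

section WeightedMean

variable {ι : Type*} [Fintype ι] {f : ι → ℝ} {F : ℝ}

theorem abs_sum_mul_sub_sum_mul_le (hf : ∀ i, |f i| ≤ F) (w w' : ι → ℝ) :
    |∑ i, f i * w i - ∑ i, f i * w' i| ≤ F * ∑ i, |w i - w' i| := by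
  rw [← Finset.sum_sub_distrib, Finset.mul_sum]
  refine (Finset.abs_sum_le_sum_abs _ _).trans (Finset.sum_le_sum fun i _ => ?_)
  rw [← mul_sub, abs_mul]
  exact mul_le_mul_of_nonneg_right (hf i) (abs_nonneg _)

theorem abs_div_sum_sub_div_sum_le (hf : ∀ i, |f i| ≤ F) {w w' : ι → ℝ} (hw' : ∀ i, 0 ≤ w' i)
    (hB : 0 < ∑ i, w i) (hB' : 0 < ∑ i, w' i) :
    |(∑ i, f i * w i) / (∑ i, w i) - (∑ i, f i * w' i) / (∑ i, w' i)|
      ≤ 2 * F * (∑ i, |w i - w' i|) / ∑ i, w i := by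
  set A := ∑ i, f i * w i
  set A' := ∑ i, f i * w' i
  set B := ∑ i, w i
  set B' := ∑ i, w' i
  set D := ∑ i, |w i - w' i|
  have hAA' : |A - A'| ≤ F * D := abs_sum_mul_sub_sum_mul_le hf w w'
  have hA' : |A'| ≤ F * B' := by
    simpa [abs_of_nonneg (hw' _), B'] using abs_sum_mul_sub_sum_mul_le hf w' 0
  have hBB' : |B' - B| ≤ D := by
    rw [abs_sub_comm, ← Finset.sum_sub_distrib]
    exact Finset.abs_sum_le_sum_abs _ _
  calc |A / B - A' / B'| = |(A - A') / B + A' * (B' - B) / (B * B')| := by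
        congr 1; field_simp; ring
    _ ≤ |A - A'| / B + |A'| * |B' - B| / (B * B') := by
        refine (abs_add_le _ _).trans_eq ?_
        rw [abs_div, abs_div, abs_mul, abs_of_pos hB, abs_of_pos (mul_pos hB hB')]
    _ ≤ F * D / B + (F * B') * D / (B * B') := by gcongr; exact (abs_nonneg _).trans hA'
    _ = 2 * F * D / B := by field_simp; ring

end WeightedMean

theorem sum_sub_min_le_card_mul {ι : Type*} [Fintype ι] (v : ι → ℝ) {a c : ℝ}
    (hva : ∀ i, v i ≤ a) : ∑ i, (v i - min (v i) c) ≤ #{i | c < v i} * (a - c) := by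
  rw [← Finset.sum_filter_of_ne fun i _ hi => lt_of_not_ge fun hic => hi (by rw [min_eq_left hic, sub_self]),
    ← nsmul_eq_mul]
  refine Finset.sum_le_card_nsmul _ _ _ fun i hi => ?_
  rw [min_eq_right (Finset.mem_filter.mp hi).2.le]
  linarith [hva i]

theorem stmt6_general (M : ℕ) (hM : 0 < M) (a : ℝ) (ha : 0 < a)
    (v : Fin M → ℝ) (hv : ∀ i, a⁻¹ ≤ v i ∧ v i ≤ a)
    (MT : ℕ) (hMT2 : MT ≤ M)
    (f : Fin M → ℝ) (F : ℝ) (hf : ∀ i, |f i| ≤ F) :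
    |(∑ i, f i * min (v i) (kthLargest v MT)) /
        (∑ i, min (v i) (kthLargest v MT)) -
      (∑ i, f i * v i) / (∑ i, v i)|
      ≤ 2 * a ^ 2 * F * MT / M := by
  have hk : MT - 1 < M := by omega
  obtain ⟨j, hj⟩ := kthLargest_mem_range v hk
  set c := kthLargest v MT
  have hc : a⁻¹ ≤ c ∧ c ≤ a := hj ▸ hv j
  have hF : 0 ≤ F := (abs_nonneg _).trans (hf ⟨0, hM⟩)
  have hclip : ∑ i, |min (v i) c - v i| ≤ MT * a := by
    have habs : ∀ i, |min (v i) c - v i| = v i - min (v i) c := fun i => by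
      rw [abs_sub_comm, abs_of_nonneg (sub_nonneg.2 (min_le_left _ _))]
    simp_rw [habs]
    refine (sum_sub_min_le_card_mul v fun i => (hv i).2).trans ?_
    have hcard : (#{i | c < v i} : ℝ) ≤ MT := by
      exact_mod_cast (card_lt_kthLargest_le v hk).trans (Nat.sub_le MT 1)
    nlinarith [inv_pos.2 ha]
  have hsum : ∀ w : Fin M → ℝ, (∀ i, a⁻¹ ≤ w i) → M * a⁻¹ ≤ ∑ i, w i := fun w hw => by
    simpa using Finset.card_nsmul_le_sum univ w _ fun i _ => hw i
  have hB := hsum _ fun i => le_min (hv i).1 hc.1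
  have hB' := hsum _ fun i => (hv i).1
  have hMa : (0 : ℝ) < M * a⁻¹ := by positivity
  calc _ ≤ 2 * F * (∑ i, |min (v i) c - v i|) / ∑ i, min (v i) c :=
        abs_div_sum_sub_div_sum_le hf (fun i => (inv_pos.2 ha).le.trans (hv i).1)
          (hMa.trans_le hB) (hMa.trans_le hB')
    _ ≤ 2 * F * (MT * a) / (M * a⁻¹) := by gcongr
    _ = 2 * a ^ 2 * F * MT / M := by field_simp

/-- the deterministic bound between the self-normalized estimators
built from weights `v i ∈ [a⁻¹, a]` and their clipped versions (clipping at the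
`M_T`-th largest value): the discrepancy is at most `2 a² ‖f‖∞ M_T / M`. -/
theorem stmt6 (M : ℕ) (hM : 0 < M) (a : ℝ) (ha : 0 < a)
    (v : Fin M → ℝ) (hv : ∀ i, a⁻¹ ≤ v i ∧ v i ≤ a)
    (MT : ℕ) (hMT1 : 1 ≤ MT) (hMT2 : MT ≤ M)
    (f : Fin M → ℝ) (F : ℝ) (hf : ∀ i, |f i| ≤ F) :
    |(∑ i, f i * min (v i) (kthLargest v MT)) /
        (∑ i, min (v i) (kthLargest v MT)) -
      (∑ i, f i * v i) / (∑ i, v i)|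
      ≤ 2 * a ^ 2 * F * MT / M :=
  stmt6_general M hM a ha v hv MT hMT2 f F hf
end

section
/- Let $u: \mathcal{X} \to \mathbb{R}$ be bounded with $\inf_x u(x) \ge a^{-1} > 0$, and let $\xi$ and $\xi^J$ be probability measures on $\mathcal{X}$ with $|(f, \xi^J) - (f, \xi)| \le \delta \|f\|_\infty$ for all bounded $f$ and some $\delta \ge 0$. Then the Bayes-updated measures $u \star \xi$ and $u \star \xi^J$, defined by $(f, u\star\xi) = (fu,\xi)/(u,\xi)$, satisfy for every bounded $f$: $|(f, u \star \xi^J) - (f, u \star \xi)| \le 2 a \|u\|_\infty \|f\|_\infty \delta$. -/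
/-!
Write `A = (fu, ξ)`, `B = (u, ξ)` and `A^J, B^J` for the same integrals against `ξ^J`. Then
`A^J/B^J - A/B = ((A^J - A) - (A^J/B^J)(B^J - B)) / B`. The error hypothesis, applied to `fu`
and to `u`, bounds `|A^J - A|` and `|B^J - B|` by `δ‖f‖∞‖u‖∞` and `δ‖u‖∞`; the updated
integral `A^J/B^J` is bounded by `‖f‖∞` because `u > 0`; and `1/B ≤ a` since `u ≥ a⁻¹`.
-/

open MeasureTheory

lemma abs_div_sub_div_le_of_inv_le {A A' B B' a F εA εB : ℝ} (ha : 0 < a)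
    (hB : a⁻¹ ≤ B) (hB' : a⁻¹ ≤ B') (hA' : |A' / B'| ≤ F)
    (hdA : |A' - A| ≤ εA) (hdB : |B' - B| ≤ εB) :
    |A' / B' - A / B| ≤ a * (εA + F * εB) := by
  have hB_pos : 0 < B := (inv_pos.mpr ha).trans_le hB
  have hB'_pos : 0 < B' := (inv_pos.mpr ha).trans_le hB'
  have hε : 0 ≤ εA + F * εB := by
    have := (abs_nonneg _).trans hA'
    have := (abs_nonneg _).trans hdA
    have := (abs_nonneg _).trans hdB
    positivity
  have hsplit : A' / B' - A / B = ((A' - A) - A' / B' * (B' - B)) / B := by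
    field_simp
    ring
  calc |A' / B' - A / B|
      = |(A' - A) - A' / B' * (B' - B)| / B := by rw [hsplit, abs_div, abs_of_pos hB_pos]
    _ ≤ (εA + F * εB) / B := by
        gcongr
        refine (abs_sub _ _).trans (add_le_add hdA ?_)
        rw [abs_mul]
        exact mul_le_mul hA' hdB (abs_nonneg _) ((abs_nonneg _).trans hA')
    _ = (εA + F * εB) * B⁻¹ := div_eq_mul_inv _ _
    _ ≤ (εA + F * εB) * a := by gcongr; exact inv_le_of_inv_le₀ ha hB
    _ = a * (εA + F * εB) := mul_comm _ _

section BayesUpdate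

variable {X : Type*} [MeasurableSpace X] {μ : Measure X} {u f : X → ℝ}

lemma inv_le_integral_of_forall_inv_le [IsProbabilityMeasure μ] {a : ℝ}
    (hu : Integrable u μ) (hlow : ∀ x, a⁻¹ ≤ u x) : a⁻¹ ≤ ∫ x, u x ∂μ := by
  simpa using integral_mono (integrable_const a⁻¹) hu hlow

lemma abs_integral_mul_div_integral_le_s18 (hu : Integrable u μ) (hu_pos : 0 < ∫ x, u x ∂μ)
    (hu_nonneg : ∀ x, 0 ≤ u x) {F : ℝ} (hf : ∀ x, |f x| ≤ F) :
    |(∫ x, f x * u x ∂μ) / ∫ x, u x ∂μ| ≤ F := by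
  have hbound : |∫ x, f x * u x ∂μ| ≤ ∫ x, F * u x ∂μ :=
    norm_integral_le_of_norm_le (f := fun x => f x * u x) (hu.const_mul F) <| .of_forall fun x => by
      rw [Real.norm_eq_abs, abs_mul, abs_of_nonneg (hu_nonneg x)]
      exact mul_le_mul_of_nonneg_right (hf x) (hu_nonneg x)
  rw [abs_div, abs_of_pos hu_pos, div_le_iff₀ hu_pos, ← integral_const_mul]
  exact hbound

end BayesUpdate

theorem stmt18_general {X : Type} [MeasurableSpace X]
    (ξ ξJ : Measure X) [IsProbabilityMeasure ξ] [IsProbabilityMeasure ξJ]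
    (u : X → ℝ) (humeas : Measurable u)
    (a : ℝ) (ha : 0 < a) (hlow : ∀ x, a⁻¹ ≤ u x)
    (Bu : ℝ) (hub : ∀ x, |u x| ≤ Bu)
    (δ : ℝ)
    (herr : ∀ f : X → ℝ, Measurable f → ∀ F : ℝ, (∀ x, |f x| ≤ F) →
      |(∫ x, f x ∂ξJ) - ∫ x, f x ∂ξ| ≤ δ * F) :
    ∀ f : X → ℝ, Measurable f → ∀ F : ℝ, (∀ x, |f x| ≤ F) →
      |(∫ x, f x * u x ∂ξJ) / (∫ x, u x ∂ξJ)
        - (∫ x, f x * u x ∂ξ) / (∫ x, u x ∂ξ)|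
        ≤ 2 * a * Bu * F * δ := by
  intro f hf F hfF
  obtain ⟨x₀⟩ := nonempty_of_isProbabilityMeasure ξ
  have hfu : ∀ x, |f x * u x| ≤ F * Bu := fun x => by
    rw [abs_mul]
    exact mul_le_mul (hfF x) (hub x) (abs_nonneg _) ((abs_nonneg _).trans (hfF x₀))
  have hu_int : ∀ (μ : Measure X) [IsProbabilityMeasure μ], Integrable u μ := fun μ _ =>
    .of_bound humeas.aestronglyMeasurable Bu (.of_forall hub)
  have hu_nonneg : ∀ x, 0 ≤ u x := fun x => (inv_pos.mpr ha).le.trans (hlow x)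
  have hBJ := inv_le_integral_of_forall_inv_le (hu_int ξJ) hlow
  calc _ ≤ a * (δ * (F * Bu) + F * (δ * Bu)) :=
        abs_div_sub_div_le_of_inv_le ha (inv_le_integral_of_forall_inv_le (hu_int ξ) hlow) hBJ
          (abs_integral_mul_div_integral_le_s18 (hu_int ξJ) ((inv_pos.mpr ha).trans_le hBJ)
            hu_nonneg hfF)
          (herr _ (hf.mul humeas) _ hfu) (herr u humeas Bu hub)
    _ = 2 * a * Bu * F * δ := by ring

/-- propagation of an integral error bound through the Bayes
update `ξ ↦ u ⋆ ξ`: if `|(f,ξ^J) - (f,ξ)| ≤ δ ‖f‖∞` for all bounded `f` and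
`a⁻¹ ≤ u ≤ Bu`, then `|(f, u⋆ξ^J) - (f, u⋆ξ)| ≤ 2 a Bu ‖f‖∞ δ`. -/
theorem stmt18 {X : Type} [MeasurableSpace X]
    (ξ ξJ : Measure X) [IsProbabilityMeasure ξ] [IsProbabilityMeasure ξJ]
    (u : X → ℝ) (humeas : Measurable u)
    (a : ℝ) (ha : 0 < a) (hlow : ∀ x, a⁻¹ ≤ u x)
    (Bu : ℝ) (hub : ∀ x, |u x| ≤ Bu)
    (δ : ℝ) (hδ : 0 ≤ δ)
    (herr : ∀ f : X → ℝ, Measurable f → ∀ F : ℝ, (∀ x, |f x| ≤ F) →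
      |(∫ x, f x ∂ξJ) - ∫ x, f x ∂ξ| ≤ δ * F) :
    ∀ f : X → ℝ, Measurable f → ∀ F : ℝ, (∀ x, |f x| ≤ F) →
      |(∫ x, f x * u x ∂ξJ) / (∫ x, u x ∂ξJ)
        - (∫ x, f x * u x ∂ξ) / (∫ x, u x ∂ξ)|
        ≤ 2 * a * Bu * F * δ :=
  stmt18_general ξ ξJ u humeas a ha hlow Bu hub δ herr
end
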